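/- Let r be a positive integer and a, b integers with 0 < a, b < r, gcd(r,a) = gcd(r,b) = 1. Let e be such that a·e ≡ 1 (mod r), and let l = min{ i : 0 < i ≤ r and i ≡ a·i ≡ b·i (mod r) }. Define g(h) as the number of pairs (s,u) ∈ ℤ≥0² with l(s+u)/r < h, l(s+u)/r ∈ ℤ, and s + b·u ≡ 0 (mod r), plus the number of pairs (t,u) ∈ ℤ≥0² with l(t+u)/r < h, l(t+u)/r ∈ ℤ, and t + (e·b mod r)·u ≡ 0 (mod r). Then g(h)·2/h² tends to 2r/l² as h → ∞. -/

import Mathlib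

/-!
If `β * l ≡ l [MOD r]`, the congruence `s + β u ≡ 0 [MOD r]` already forces `r ∣ l (s + u)`,
and `l (s + u) < h r` says `s + u < ⌈r h / l⌉`. So each of the two counts is the number of
lattice points `(s, u)` with `s + u < n := ⌈r h / l⌉` and `s` in a prescribed residue class
mod `r` depending on `u`. For fixed `u` there are `(n - u) / r + O(1)` such `s`, hence
`n² / (2 r) + O(n)` points in all, and each family contributes `r h² / (2 l²) (1 + o(1))`.
For `β = e * b % r` the hypothesis follows from `a e ≡ 1`, `a l ≡ l` and `b l ≡ l`.
-/

open Filter Finset Topology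

def residueTriangle (r k n : ℕ) : Finset (ℕ × ℕ) :=
  {p ∈ range n ×ˢ range n | p.1 + p.2 < n ∧ (p.1 + k * p.2) % r = 0}

lemma mem_residueTriangle {r k n : ℕ} {p : ℕ × ℕ} :
    p ∈ residueTriangle r k n ↔ p.1 + p.2 < n ∧ (p.1 + k * p.2) % r = 0 := by
  simp only [residueTriangle, mem_filter, mem_product, mem_range, and_iff_right_iff_imp]
  omega

lemma card_filter_range_add_mod_eq_zero {r : ℕ} (hr : 0 < r) (n k : ℕ) :
    #{s ∈ range n | (s + k) % r = 0} = n / r + if (r - k % r) % r < n % r then 1 else 0 := by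
  -- `r - k % r` represents the class of `-k`
  rw [← Nat.count_modEq_card _ hr, Nat.count_eq_card_filter_range]
  congr 1
  refine filter_congr fun s _ => ?_
  have hk : r - k % r + k ≡ 0 [MOD r] := by
    rw [Nat.ModEq, ← Nat.add_mod_mod, Nat.sub_add_cancel (Nat.mod_lt _ hr).le, Nat.mod_self,
      Nat.zero_mod]
  rw [← Nat.zero_mod r, ← Nat.ModEq]
  exact ⟨fun hs => Nat.ModEq.add_right_cancel' k (hs.trans hk.symm),
    fun hs => (Nat.ModEq.add_right k hs).trans hk⟩

lemma card_residueTriangle (r k n : ℕ) :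
    #(residueTriangle r k n) = ∑ u ∈ range n, #{s ∈ range (n - u) | (s + k * u) % r = 0} := by
  rw [residueTriangle, card_filter, sum_product_right]
  refine sum_congr rfl fun u _ => ?_
  rw [← card_filter]
  congr 1
  ext s
  simp only [mem_filter, mem_range]
  omega

lemma sum_range_sub_mul_two (n : ℕ) : (∑ u ∈ range n, (n - u)) * 2 = n * (n + 1) := by
  have := sum_range_reflect (fun j => j) (n + 1)
  simp only [add_tsub_cancel_right] at this
  rw [sum_range_succ, Nat.sub_self, add_zero] at this
  rw [this, sum_range_id_mul_two, add_tsub_cancel_right, mul_comm]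

lemma residueTriangle_card_bounds {r : ℕ} (hr : 0 < r) (k n : ℕ) :
    r * #(residueTriangle r k n) ≤ ∑ u ∈ range n, (n - u) + r * n ∧
      ∑ u ∈ range n, (n - u) ≤ r * #(residueTriangle r k n) + r * n := by
  rw [card_residueTriangle, mul_sum]
  have fibre := fun u => card_filter_range_add_mod_eq_zero hr (n - u) (k * u)
  constructor
  · calc ∑ u ∈ range n, r * #{s ∈ range (n - u) | (s + k * u) % r = 0}
        ≤ ∑ u ∈ range n, (n - u + r) := sum_le_sum fun u _ => by
          rw [fibre]; have := Nat.mul_div_le (n - u) r; split_ifs <;> nlinarith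
      _ = _ := by rw [sum_add_distrib, sum_const, card_range, smul_eq_mul, mul_comm]
  · calc ∑ u ∈ range n, (n - u)
        ≤ ∑ u ∈ range n, (r * #{s ∈ range (n - u) | (s + k * u) % r = 0} + r) :=
          sum_le_sum fun u _ => by
            rw [fibre]; have := Nat.lt_div_mul_add (a := n - u) hr; split_ifs <;> nlinarith
      _ = _ := by rw [sum_add_distrib, sum_const, card_range, smul_eq_mul, mul_comm n r]

lemma abs_div_sub_le_of_mul_le {r n N S : ℝ} (hr : 0 < r) (hn : 1 ≤ n)
    (hS : S * 2 = n * (n + 1)) (hle : r * N ≤ S + r * n) (hge : S ≤ r * N + r * n) :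
    |N * 2 / n ^ 2 - 1 / r| ≤ (2 * r + 1) / r / n := by
  have hn0 : 0 < n := by linarith
  have e : N * 2 / n ^ 2 - 1 / r = (2 * (r * N - S) + n) / n / r / n := by
    field_simp; linarith
  rw [e, abs_div, abs_of_pos hn0, abs_div, abs_of_pos hr]
  gcongr
  rw [abs_div, abs_of_pos hn0, div_le_iff₀ hn0, abs_le]
  constructor <;> nlinarith

lemma tendsto_card_residueTriangle {r : ℕ} (hr : 0 < r) (k : ℕ) :
    Tendsto (fun n : ℕ => (#(residueTriangle r k n) : ℝ) * 2 / n ^ 2) atTop (𝓝 (1 / r : ℝ)) := by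
  have hdist : Tendsto (fun n : ℕ => (2 * r + 1 : ℝ) / r / n) atTop (𝓝 0) :=
    tendsto_const_div_atTop_nhds_zero_nat _
  refine tendsto_iff_norm_sub_tendsto_zero.2 (squeeze_zero' (Eventually.of_forall
    fun _ => norm_nonneg _) ?_ hdist)
  filter_upwards [eventually_ge_atTop 1] with n hn
  obtain ⟨hle, hge⟩ := residueTriangle_card_bounds hr k n
  rw [Real.norm_eq_abs]
  exact abs_div_sub_le_of_mul_le (S := ((∑ u ∈ range n, (n - u) : ℕ) : ℝ))
    (by exact_mod_cast hr) (by exact_mod_cast hn) (by exact_mod_cast sum_range_sub_mul_two n)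
    (by exact_mod_cast hle) (by exact_mod_cast hge)

lemma dvd_mul_add_of_add_mul_mod_eq_zero {r l β s u : ℕ} (hβ : β * l ≡ l [MOD r])
    (hs : (s + β * u) % r = 0) : r ∣ l * (s + u) := by
  have hmod : l * (s + u) ≡ l * (s + β * u) [MOD r] := by
    have := (hβ.mul_right u).add_left (l * s)
    convert this.symm using 1 <;> ring
  exact (Nat.modEq_zero_iff_dvd).1 <|
    hmod.trans ((Nat.modEq_zero_iff_dvd).2 (dvd_mul_of_dvd_right (Nat.dvd_of_mod_eq_zero hs) l))

lemma mul_lt_mul_iff_lt_ceil_div_mul {r l : ℕ} (hl : 0 < l) (h n : ℕ) :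
    l * n < h * r ↔ n < ⌈(r / l : ℝ) * h⌉₊ := by
  rw [Nat.lt_ceil, div_mul_eq_mul_div, lt_div_iff₀ (by exact_mod_cast hl), mul_comm (n : ℝ),
    mul_comm (r : ℝ)]
  exact_mod_cast Iff.rfl

lemma natCard_eq_card_residueTriangle {r l β : ℕ} (hl : 0 < l) (hβ : β * l ≡ l [MOD r])
    (h : ℕ) :
    Nat.card {p : ℕ × ℕ // l * (p.1 + p.2) < h * r ∧ r ∣ l * (p.1 + p.2) ∧
        (p.1 + β * p.2) % r = 0} = #(residueTriangle r β ⌈(r / l : ℝ) * h⌉₊) := by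
  rw [← Nat.card_eq_finsetCard]
  refine Nat.card_congr (Equiv.subtypeEquivRight fun p => ?_)
  rw [mem_residueTriangle, ← mul_lt_mul_iff_lt_ceil_div_mul hl]
  exact ⟨fun ⟨hlt, _, hs⟩ => ⟨hlt, hs⟩,
    fun ⟨hlt, hs⟩ => ⟨hlt, dvd_mul_add_of_add_mul_mod_eq_zero hβ hs, hs⟩⟩

lemma tendsto_natCard_family {r l β : ℕ} (hr : 0 < r) (hl : 0 < l) (hβ : β * l ≡ l [MOD r]) :
    Tendsto (fun h : ℕ => (Nat.card {p : ℕ × ℕ // l * (p.1 + p.2) < h * r ∧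
        r ∣ l * (p.1 + p.2) ∧ (p.1 + β * p.2) % r = 0} : ℝ) * 2 / (h : ℝ) ^ 2)
      atTop (𝓝 ((r : ℝ) / (l : ℝ) ^ 2)) := by
  set c : ℝ := r / l with hc_def
  have hc : 0 < c := by positivity
  have hceil_top : Tendsto (fun h : ℕ => ⌈c * h⌉₊) atTop atTop :=
    tendsto_nat_ceil_atTop.comp (tendsto_natCast_atTop_atTop.const_mul_atTop hc)
  have hceil_div : Tendsto (fun h : ℕ => (⌈c * h⌉₊ : ℝ) / h) atTop (𝓝 c) :=
    (tendsto_nat_ceil_mul_div_atTop hc.le).comp tendsto_natCast_atTop_atTop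
  have hlim := ((tendsto_card_residueTriangle hr β).comp hceil_top).mul (hceil_div.pow 2)
  have hval : 1 / (r : ℝ) * c ^ 2 = r / (l : ℝ) ^ 2 := by
    rw [hc_def]; field_simp
  rw [hval] at hlim
  refine hlim.congr' ?_
  filter_upwards [eventually_ge_atTop 1] with h hh
  have hceil : (0 : ℝ) < ⌈c * h⌉₊ := by
    exact_mod_cast Nat.ceil_pos.2 (by positivity)
  have hh' : (0 : ℝ) < h := by exact_mod_cast hh
  rw [natCard_eq_card_residueTriangle hl hβ, ← hc_def, Function.comp_apply]
  field_simp

lemma Nat.ModEq.mul_modEq_self_of_inverse {r a e l : ℕ} (he : a * e ≡ 1 [MOD r])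
    (hal : a * l ≡ l [MOD r]) : e * l ≡ l [MOD r] :=
  calc e * l ≡ e * (a * l) [MOD r] := (hal.mul_left e).symm
    _ = a * e * l := by ring
    _ ≡ 1 * l [MOD r] := he.mul_right l
    _ = l := one_mul l

theorem stmt4_general (r a b e : ℕ) (hr : 0 < r) (he : a * e % r = 1 % r) :
    ∀ l : ℕ, l = sInf {i : ℕ | 0 < i ∧ i ≤ r ∧ a * i ≡ i [MOD r] ∧ b * i ≡ i [MOD r]} →
    Tendsto (fun h : ℕ =>
      (((Nat.card {p : ℕ × ℕ // l * (p.1 + p.2) < h * r ∧ r ∣ l * (p.1 + p.2) ∧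
            (p.1 + b * p.2) % r = 0}
        + Nat.card {p : ℕ × ℕ // l * (p.1 + p.2) < h * r ∧ r ∣ l * (p.1 + p.2) ∧
            (p.1 + (e * b % r) * p.2) % r = 0}) : ℝ) * 2) / (h : ℝ) ^ 2)
      atTop (nhds (2 * (r : ℝ) / (l : ℝ) ^ 2)) := by
  intro l hl
  have hr_mem : r ∈ {i : ℕ | 0 < i ∧ i ≤ r ∧ a * i ≡ i [MOD r] ∧ b * i ≡ i [MOD r]} :=
    ⟨hr, le_rfl, by simp [Nat.ModEq], by simp [Nat.ModEq]⟩
  obtain ⟨hl0, -, hal, hbl⟩ := hl ▸ Nat.sInf_mem ⟨r, hr_mem⟩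
  have hebl : e * b % r * l ≡ l [MOD r] :=
    calc e * b % r * l ≡ e * b * l [MOD r] := (Nat.mod_modEq _ _).mul_right l
      _ = e * (b * l) := mul_assoc _ _ _
      _ ≡ e * l [MOD r] := hbl.mul_left e
      _ ≡ l [MOD r] := Nat.ModEq.mul_modEq_self_of_inverse he hal
  have hsum := (tendsto_natCard_family hr hl0 hbl).add (tendsto_natCard_family hr hl0 hebl)
  convert hsum using 2 with h
  · ring
  · ring

/-- Weighted multiplicity of the A-type surface S₂ = {xy + zⁿ = 0} ⊂ ℂ³/ℤ_r(1,a,b):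
    counting monomials x^s z^u and y^t z^u with the integrality and congruence
    conditions, g(h)·2/h² → 2r/l². -/
theorem stmt4 (r a b e : ℕ) (hr : 0 < r) (ha : 0 < a ∧ a < r) (hb : 0 < b ∧ b < r)
    (hca : Nat.Coprime r a) (hcb : Nat.Coprime r b) (he : a * e % r = 1 % r) :
    ∀ l : ℕ, l = sInf {i : ℕ | 0 < i ∧ i ≤ r ∧ a * i ≡ i [MOD r] ∧ b * i ≡ i [MOD r]} →
    Tendsto (fun h : ℕ =>
      (((Nat.card {p : ℕ × ℕ // l * (p.1 + p.2) < h * r ∧ r ∣ l * (p.1 + p.2) ∧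
            (p.1 + b * p.2) % r = 0}
        + Nat.card {p : ℕ × ℕ // l * (p.1 + p.2) < h * r ∧ r ∣ l * (p.1 + p.2) ∧
            (p.1 + (e * b % r) * p.2) % r = 0}) : ℝ) * 2) / (h : ℝ) ^ 2)
      atTop (nhds (2 * (r : ℝ) / (l : ℝ) ^ 2)) :=
  stmt4_general r a b e hr he
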